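/- Let f(x) = 1 + Ψ(x) for x ∈ [0, 1/2]. Then for every integer m ≥ 1 and every y ∈ (0, 1/2), the point (1−y)/(m+1−m·y) lies in the interval (1/(m+2), 1/(m+1)) ⊂ (0, 1/2], and the self-similarity relation f(y) = (m+2)·y − (m+2) + (m+1−m·y)·f( (1−y)/(m+1−m·y) ) holds. -/

import Mathlib

/-- `T(x) = x·(1 + {1/x})` for `x ≠ 0`, `T(0) = 0`. -/
noncomputable def Tmap (x : ℝ) : ℝ := if x = 0 then 0 else x * (1 + Int.fract (1 / x))

/-- `I(x) = {1/x} / (1 + {1/x})` for `x ≠ 0`, `I(0) = 0`. -/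
noncomputable def Imap (x : ℝ) : ℝ :=
  if x = 0 then 0 else Int.fract (1 / x) / (1 + Int.fract (1 / x))

/-- `Ψ(x) = 2x + 2·Σ_{j ≥ 1} T(x)·T(I(x))·⋯·T(I^{j-1}(x))·I^{j}(x)`. -/
noncomputable def Psi (x : ℝ) : ℝ :=
  2 * x + 2 * ∑' j : ℕ, (∏ i ∈ Finset.range (j + 1), Tmap (Imap^[i] x)) * Imap^[j + 1] x

/-!
Shifting the series defining `Ψ` by one index gives the functional equation
`Ψ(x) = 2x + T(x)·Ψ(I(x))`. On `(1/(m+2), 1/(m+1))` the map `I` has the inverse branch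
`y ↦ x = (1-y)/(m+1-m·y)`: there `1/x = (m+1) + y/(1-y)` with `0 ≤ y/(1-y) < 1`, so
`{1/x} = y/(1-y)`, whence `I(x) = y` and `T(x) = 1/(m+1-m·y)`. Substituting into the functional
equation and clearing the denominator gives the self-similarity relation.
-/

open Set Finset

lemma Imap_mem_Icc (x : ℝ) : Imap x ∈ Icc (0 : ℝ) (1 / 2) := by
  unfold Imap
  split_ifs
  · norm_num
  · have h0 := Int.fract_nonneg (1 / x)
    have h1 := Int.fract_lt_one (1 / x)
    refine ⟨by positivity, ?_⟩
    rw [div_le_iff₀ (by linarith)]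
    linarith

lemma Imap_iterate_mem_Icc {x : ℝ} (hx : x ∈ Icc (0 : ℝ) (1 / 2)) (n : ℕ) :
    Imap^[n] x ∈ Icc (0 : ℝ) (1 / 2) := by
  cases n with
  | zero => exact hx
  | succ n => rw [Function.iterate_succ_apply']; exact Imap_mem_Icc _

lemma Tmap_nonneg {x : ℝ} (hx : 0 ≤ x) : 0 ≤ Tmap x := by
  unfold Tmap
  split_ifs
  · rfl
  · exact mul_nonneg hx (by linarith [Int.fract_nonneg (1 / x)])

lemma Tmap_le_two_thirds {x : ℝ} (hx : x ≤ 1 / 2) : Tmap x ≤ 2 / 3 := by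
  unfold Tmap
  split_ifs with hx0
  · norm_num
  have hf0 := Int.fract_nonneg (1 / x)
  have hf1 := Int.fract_lt_one (1 / x)
  rcases lt_or_gt_of_ne hx0 with hneg | hpos
  · nlinarith
  rcases le_or_gt x (1 / 3) with hx3 | hx3
  · nlinarith
  -- for `x ∈ (1/3, 1/2]`, `T(x) = 1 - (⌊1/x⌋ - 1)·x` with `⌊1/x⌋ ≥ 2`
  have hfloor : (2 : ℝ) ≤ ⌊1 / x⌋ := by
    exact_mod_cast Int.le_floor.mpr (by rw [le_div_iff₀ hpos]; push_cast; linarith)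
  have hT : x * Int.fract (1 / x) = 1 - x * ⌊1 / x⌋ := by
    rw [Int.fract]
    field_simp
  nlinarith

noncomputable def psiTerm (x : ℝ) (j : ℕ) : ℝ :=
  (∏ i ∈ range j, Tmap (Imap^[i] x)) * Imap^[j] x

lemma psiTerm_zero (x : ℝ) : psiTerm x 0 = x := by
  simp [psiTerm]

lemma psiTerm_succ (x : ℝ) (j : ℕ) : psiTerm x (j + 1) = Tmap x * psiTerm (Imap x) j := by
  simp only [psiTerm, prod_range_succ', Function.iterate_succ_apply, Function.iterate_zero_apply]
  ring

lemma Psi_eq_tsum_psiTerm_succ (x : ℝ) : Psi x = 2 * x + 2 * ∑' j, psiTerm x (j + 1) := rfl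

lemma psiTerm_nonneg {x : ℝ} (hx : x ∈ Icc (0 : ℝ) (1 / 2)) (j : ℕ) : 0 ≤ psiTerm x j :=
  mul_nonneg (prod_nonneg fun i _ => Tmap_nonneg (Imap_iterate_mem_Icc hx i).1)
    (Imap_iterate_mem_Icc hx j).1

lemma psiTerm_le_geometric {x : ℝ} (hx : x ∈ Icc (0 : ℝ) (1 / 2)) (j : ℕ) :
    psiTerm x j ≤ (2 / 3) ^ j :=
  calc psiTerm x j ≤ (∏ _i ∈ range j, (2 / 3 : ℝ)) * 1 := by
        refine mul_le_mul ?_ (by linarith [(Imap_iterate_mem_Icc hx j).2])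
          (Imap_iterate_mem_Icc hx j).1 (by positivity)
        exact prod_le_prod (fun i _ => Tmap_nonneg (Imap_iterate_mem_Icc hx i).1)
          fun i _ => Tmap_le_two_thirds (Imap_iterate_mem_Icc hx i).2
    _ = (2 / 3) ^ j := by rw [prod_const, card_range, mul_one]

lemma summable_psiTerm {x : ℝ} (hx : x ∈ Icc (0 : ℝ) (1 / 2)) : Summable (psiTerm x) :=
  Summable.of_nonneg_of_le (psiTerm_nonneg hx) (psiTerm_le_geometric hx)
    (summable_geometric_of_lt_one (by norm_num) (by norm_num))

lemma Psi_eq_two_mul_tsum {x : ℝ} (hx : x ∈ Icc (0 : ℝ) (1 / 2)) :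
    Psi x = 2 * ∑' j, psiTerm x j := by
  rw [Psi_eq_tsum_psiTerm_succ, (summable_psiTerm hx).tsum_eq_zero_add, psiTerm_zero]
  ring

theorem Psi_eq_two_mul_add_Tmap_mul_Psi_Imap (x : ℝ) :
    Psi x = 2 * x + Tmap x * Psi (Imap x) := by
  rw [Psi_eq_tsum_psiTerm_succ, Psi_eq_two_mul_tsum (Imap_mem_Icc x)]
  simp only [psiTerm_succ, tsum_mul_left]
  ring

section InverseBranch

variable (m : ℕ) {y : ℝ}

lemma inverseBranch_denom_pos (hy : y < 1) : 0 < (m : ℝ) + 1 - m * y := by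
  nlinarith [(Nat.cast_nonneg m : (0 : ℝ) ≤ m)]

lemma inverseBranch_mem_Ioo (hy : y ∈ Ioo (0 : ℝ) (1 / 2)) :
    (1 - y) / ((m : ℝ) + 1 - m * y) ∈ Ioo (1 / ((m : ℝ) + 2)) (1 / ((m : ℝ) + 1)) := by
  obtain ⟨hy0, hy2⟩ := hy
  have hd := inverseBranch_denom_pos m (y := y) (by linarith)
  constructor
  · rw [div_lt_div_iff₀ (by positivity) hd]; nlinarith
  · rw [div_lt_div_iff₀ hd (by positivity)]; nlinarith

lemma fract_one_div_inverseBranch (hy0 : 0 ≤ y) (hy2 : y < 1 / 2) :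
    Int.fract (1 / ((1 - y) / ((m : ℝ) + 1 - m * y))) = y / (1 - y) := by
  have hy1 : 1 - y ≠ 0 := by linarith
  have hinv : 1 / ((1 - y) / ((m : ℝ) + 1 - m * y)) = ((m + 1 : ℤ) : ℝ) + y / (1 - y) := by
    push_cast
    field_simp
    ring
  rw [hinv, Int.fract_intCast_add, Int.fract_eq_self]
  exact ⟨div_nonneg hy0 (by linarith), (div_lt_one (by linarith)).mpr (by linarith)⟩

lemma Imap_inverseBranch (hy0 : 0 ≤ y) (hy2 : y < 1 / 2) :
    Imap ((1 - y) / ((m : ℝ) + 1 - m * y)) = y := by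
  have hd := inverseBranch_denom_pos m (y := y) (by linarith)
  rw [Imap, if_neg (div_pos (by linarith) hd).ne', fract_one_div_inverseBranch m hy0 hy2]
  have hy1 : 1 - y ≠ 0 := by linarith
  field_simp
  ring

lemma Tmap_inverseBranch (hy0 : 0 ≤ y) (hy2 : y < 1 / 2) :
    Tmap ((1 - y) / ((m : ℝ) + 1 - m * y)) = 1 / ((m : ℝ) + 1 - m * y) := by
  have hd := inverseBranch_denom_pos m (y := y) (by linarith)
  rw [Tmap, if_neg (div_pos (by linarith) hd).ne', fract_one_div_inverseBranch m hy0 hy2]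
  have hy1 : 1 - y ≠ 0 := by linarith
  field_simp
  ring

lemma Psi_inverseBranch (hy0 : 0 ≤ y) (hy2 : y < 1 / 2) :
    ((m : ℝ) + 1 - m * y) * Psi ((1 - y) / ((m : ℝ) + 1 - m * y)) = 2 * (1 - y) + Psi y := by
  have hd := inverseBranch_denom_pos m (y := y) (by linarith)
  rw [Psi_eq_two_mul_add_Tmap_mul_Psi_Imap, Imap_inverseBranch m hy0 hy2,
    Tmap_inverseBranch m hy0 hy2]
  field_simp

end InverseBranch

theorem stmt_13 :
    ∀ m : ℕ, 1 ≤ m → ∀ y ∈ Set.Ioo (0 : ℝ) (1 / 2),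
      (1 - y) / ((m : ℝ) + 1 - m * y) ∈ Set.Ioo (1 / ((m : ℝ) + 2)) (1 / ((m : ℝ) + 1)) ∧
      1 + Psi y =
        ((m : ℝ) + 2) * y - ((m : ℝ) + 2) +
          ((m : ℝ) + 1 - m * y) * (1 + Psi ((1 - y) / ((m : ℝ) + 1 - m * y))) := by
  intro m _ y hy
  refine ⟨inverseBranch_mem_Ioo m hy, ?_⟩
  linear_combination -Psi_inverseBranch m hy.1.le hy.2
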